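/- Let f be a Boolean network, x, y ∈ 𝔹^n, and suppose y belongs to an attractor of the most permissive semantics. Then y ∈ Reach_f(x) if and only if y ∈ γ(ẑ^∅), where ẑ^∅ is obtained from x by exhaustively applying Boolean-to-dynamic transitions to all components; moreover, whenever y ∈ γ(ẑ^∅), for every component i with ẑ^∅_i ∉ 𝔹 there exists z ∈ γ(ẑ^∅) with f_i(z) = y_i. -/

import Mathlib

inductive PState : Type
  | zero | up | down | one
deriving DecidableEq

def PState.ofBool : Bool → PState
  | false => .zero
  | true  => .one

def PState.isBool (p : PState) : Prop := p = .zero ∨ p = .one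

abbrev BN (n : ℕ) := (Fin n → Bool) → Fin n → Bool

def gamma {n : ℕ} (x : Fin n → PState) : Set (Fin n → Bool) :=
  {b | ∀ i (v : Bool), x i = PState.ofBool v → b i = v}

def mpStep {n : ℕ} (f : BN n) (x y : Fin n → PState) : Prop :=
  ∃ i : Fin n, x i ≠ y i ∧ (∀ j, j ≠ i → x j = y j) ∧
    ((y i = .up ∧ x i ≠ .one ∧ ∃ z ∈ gamma x, f z i = true) ∨
     (y i = .one ∧ x i = .up) ∨
     (y i = .down ∧ x i ≠ .zero ∧ ∃ z ∈ gamma x, f z i = false) ∨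
     (y i = .zero ∧ x i = .down))

def mpReachP {n : ℕ} (f : BN n) : (Fin n → PState) → (Fin n → PState) → Prop :=
  Relation.ReflTransGen (mpStep f)

def embed {n : ℕ} (x : Fin n → Bool) : Fin n → PState := fun i => PState.ofBool (x i)

def mpReach {n : ℕ} (f : BN n) (x : Fin n → Bool) : Set (Fin n → Bool) :=
  {y | mpReachP f (embed x) (embed y)}

def cubeSet {n : ℕ} (h : Fin n → Option Bool) : Set (Fin n → Bool) :=
  {z | ∀ i b, h i = some b → z i = b}

def smaller {n : ℕ} (h h' : Fin n → Option Bool) : Prop :=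
  ∀ i b, h' i = some b → h i = some b

def kClosed {n : ℕ} (f : BN n) (K : Finset (Fin n)) (h : Fin n → Option Bool) : Prop :=
  ∀ z ∈ cubeSet h, ∀ i ∈ K, h i = none ∨ h i = some (f z i)

def closedBy {n : ℕ} (f : BN n) (h : Fin n → Option Bool) : Prop :=
  ∀ z ∈ cubeSet h, f z ∈ cubeSet h

def smallestClosed {n : ℕ} (f : BN n) (x : Fin n → Bool) (h : Fin n → Option Bool) : Prop :=
  x ∈ cubeSet h ∧ closedBy f h ∧
    ∀ h', x ∈ cubeSet h' → closedBy f h' → smaller h h'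

def minClosed {n : ℕ} (f : BN n) (h : Fin n → Option Bool) : Prop :=
  closedBy f h ∧ ∀ h', closedBy f h' → smaller h' h → h' = h

def faStep {n : ℕ} (f : BN n) (x y : Fin n → Bool) : Prop :=
  ∃ i : Fin n, x i ≠ y i ∧ (∀ j, j ≠ i → x j = y j) ∧ y i = f x i

def aStep {n : ℕ} (f : BN n) (x y : Fin n → Bool) : Prop :=
  x ≠ y ∧ ∀ i, x i ≠ y i → y i = f x i

def mnStep {n m : ℕ} (F : (Fin n → Fin (m+1)) → Fin n → ℤ)
    (x y : Fin n → Fin (m+1)) : Prop :=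
  x ≠ y ∧ ∀ i, x i ≠ y i → ((y i : ℤ) = (x i : ℤ) + F x i)

def beta {n m : ℕ} (x : Fin n → Fin (m+1)) : Set (Fin n → Bool) :=
  {b | ∀ i, ((x i : ℕ) = 0 → b i = false) ∧ ((x i : ℕ) = m → b i = true)}

def refines {n m : ℕ} (F : (Fin n → Fin (m+1)) → Fin n → ℤ) (f : BN n) : Prop :=
  ∀ x i, (F x i > 0 → ∃ b ∈ beta x, f b i = true) ∧
         (F x i < 0 → ∃ b ∈ beta x, f b i = false)

def alpha {n m : ℕ} (x : Fin n → Fin (m+1)) : Set (Fin n → PState) :=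
  {p | ∀ i, ((x i : ℕ) = 0 ↔ p i = .zero) ∧ ((x i : ℕ) = m ↔ p i = .one)}

def bdStep {n : ℕ} (f : BN n) (L : Finset (Fin n)) (a b : Fin n → PState) : Prop :=
  mpStep f a b ∧ ∃ j, a j ≠ b j ∧ j ∉ L ∧ (a j).isBool ∧ ¬ (b j).isBool

def exhaustive {n : ℕ} (f : BN n) (x : Fin n → Bool) (L : Finset (Fin n))
    (zhat : Fin n → PState) : Prop :=
  Relation.ReflTransGen (bdStep f L) (embed x) zhat ∧ ∀ z', ¬ bdStep f L zhat z'

/-!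
Exhaustive Boolean-to-dynamic transitions stop exactly when every Boolean component of `ẑ` is
confirmed by `f` on all of `γ(ẑ)`, i.e. when `γ(ẑ)` is a trap space; since `x ∈ γ(ẑ)`, every
configuration reachable from `x` stays in it. Conversely, from `ẑ` each dynamic component can
first be turned towards `y_i` (the witnesses live in `γ(ẑ)`, which does not shrink meanwhile) and
then settled to `y_i`. The witnesses exist because `y` lies in an attractor: if `f_i ≡ ¬y_i` on
`γ(ẑ)`, then `y` can flip its `i`-th component, after which `γ(ẑ) ∩ {z_i = ¬y_i}` is a trap space
that does not contain `y`.
-/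

open PState Function Set

namespace PState

def toward : Bool → PState
  | false => .down
  | true => .up

theorem ofBool_injective : Injective ofBool := by
  intro v w h
  cases v <;> cases w <;> first | rfl | cases h

theorem isBool_ofBool (v : Bool) : (ofBool v).isBool := by
  cases v
  exacts [Or.inl rfl, Or.inr rfl]

theorem isBool_iff {p : PState} : p.isBool ↔ ∃ v, p = ofBool v := by
  refine ⟨?_, fun ⟨v, hv⟩ => hv ▸ isBool_ofBool v⟩
  rintro (h | h)
  exacts [⟨false, h⟩, ⟨true, h⟩]

theorem toward_ne_ofBool (b v : Bool) : toward b ≠ ofBool v := by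
  cases b <;> cases v <;> nofun

theorem not_isBool_toward (b : Bool) : ¬ (toward b).isBool := by
  cases b <;> nofun

end PState

section

variable {n : ℕ} {f : BN n}

theorem gamma_subset_gamma_iff {p t : Fin n → PState} :
    gamma p ⊆ gamma t ↔ ∀ i v, t i = ofBool v → p i = ofBool v := by
  refine ⟨fun h i v hti => ?_, fun h z hz i v hti => hz i v (h i v hti)⟩
  classical
  let b : Fin n → Bool := fun j => if p j = .one then true else if p j = .zero then false else !v
  have hb : b ∈ gamma p := by
    rintro j (_ | _) hj <;> simp [b, hj, ofBool]
  have hbi := h hb i v hti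
  cases hp : p i <;> cases v <;> simp_all [b, ofBool]

theorem gamma_embed (y : Fin n → Bool) : gamma (embed y) = {y} := by
  ext z
  refine ⟨fun hz => funext fun i => hz i (y i) rfl, ?_⟩
  rintro rfl i v hi
  exact ofBool_injective hi

theorem gamma_update_of_not_isBool {r : Fin n → PState} {j : Fin n} {s : PState}
    (hr : ¬ (r j).isBool) (hs : ¬ s.isBool) : gamma (update r j s) = gamma r := by
  have subset_update : ∀ {p : Fin n → PState} {s' : PState}, ¬ s'.isBool →
      gamma p ⊆ gamma (update p j s') := by
    intro p s' hs' z hz i v hi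
    by_cases hij : i = j
    · subst hij
      rw [update_self] at hi
      exact absurd (hi ▸ isBool_ofBool v) hs'
    · exact hz i v (by rwa [update_of_ne hij] at hi)
  refine (subset_update hs).antisymm' ?_
  simpa using subset_update (p := update r j s) hr

theorem mpStep_update_toward {p : Fin n → PState} {i : Fin n} {b : Bool}
    (hb : p i ≠ ofBool b) (hne : p i ≠ toward b) (hz : ∃ z ∈ gamma p, f z i = b) :
    mpStep f p (update p i (toward b)) := by
  refine ⟨i, by rwa [update_self], fun j hj => (update_of_ne hj _ _).symm, ?_⟩
  rw [update_self]
  cases b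
  · exact Or.inr (Or.inr (Or.inl ⟨rfl, hb, hz⟩))
  · exact Or.inl ⟨rfl, hb, hz⟩

theorem mpStep_update_ofBool {p : Fin n → PState} {i : Fin n} {b : Bool}
    (h : p i = toward b) : mpStep f p (update p i (ofBool b)) := by
  refine ⟨i, by rw [update_self, h]; exact toward_ne_ofBool b b,
    fun j hj => (update_of_ne hj _ _).symm, ?_⟩
  rw [update_self]
  cases b
  · exact Or.inr (Or.inr (Or.inr ⟨rfl, h⟩))
  · exact Or.inr (Or.inl ⟨rfl, h⟩)

theorem mpStep.eq_of_ne {p q : Fin n → PState} (h : mpStep f p q) {j k : Fin n}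
    (hj : p j ≠ q j) (hk : k ≠ j) : p k = q k := by
  obtain ⟨i, -, heq, -⟩ := h
  obtain rfl : j = i := by_contra fun hji => hj (heq j hji)
  exact heq k hk

theorem mpStep.apply_eq_ofBool {p q : Fin n → PState} (h : mpStep f p q) {i : Fin n} {b : Bool}
    (hi : p i = ofBool b) (hf : ∀ z ∈ gamma p, f z i = b) : q i = ofBool b := by
  obtain ⟨k, -, heq, hk⟩ := h
  by_cases hik : i = k
  · subst hik
    rcases hk with ⟨-, hp1, z, hz, hfz⟩ | ⟨-, hup⟩ | ⟨-, hp0, z, hz, hfz⟩ | ⟨-, hdn⟩ <;>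
      cases b <;> simp_all [ofBool]
  · rw [← heq i hik, hi]

theorem gamma_subset_of_mpReachP {t p q : Fin n → PState} (ht : MapsTo f (gamma t) (gamma t))
    (hp : gamma p ⊆ gamma t) (h : mpReachP f p q) : gamma q ⊆ gamma t := by
  induction h with
  | refl => exact hp
  | tail _ hs ih =>
    have hr := gamma_subset_gamma_iff.1 ih
    exact gamma_subset_gamma_iff.2 fun i v hti =>
      hs.apply_eq_ofBool (hr i v hti) fun z hz => ht (ih hz) i v hti

theorem mpReachP_of_forall_update (C : (Fin n → PState) → Prop) {p q : Fin n → PState}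
    (hp : C p) (hstep : ∀ r, C r → ∀ j, r j ≠ q j →
      C (update r j (q j)) ∧ mpStep f r (update r j (q j))) :
    mpReachP f p q := by
  classical
  suffices ∀ D : Finset (Fin n), ∀ r, C r → (∀ j, r j ≠ q j → j ∈ D) → mpReachP f r q from
    this Finset.univ p hp fun j _ => Finset.mem_univ j
  intro D
  induction D using Finset.induction_on with
  | empty =>
    intro r _ hr
    obtain rfl : r = q := funext fun j => by_contra fun h => Finset.notMem_empty j (hr j h)
    exact .refl
  | insert a D _ ih =>
    intro r hC hr
    by_cases hra : r a = q a
    · refine ih r hC fun j hj => (Finset.mem_insert.1 (hr j hj)).resolve_left ?_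
      rintro rfl
      exact hj hra
    · obtain ⟨hC', hs⟩ := hstep r hC a hra
      refine .head hs (ih _ hC' fun j hj => ?_)
      have hja : j ≠ a := by
        rintro rfl
        simp at hj
      rw [update_of_ne hja] at hj
      exact (Finset.mem_insert.1 (hr j hj)).resolve_left hja

theorem update_mem_mpReach {y : Fin n → Bool} {i : Fin n} (h : f y i ≠ y i) :
    update y i (f y i) ∈ mpReach f y := by
  have hembed : embed (update y i (f y i)) = update (embed y) i (ofBool (f y i)) :=
    comp_update ofBool y i (f y i)
  have hto : mpStep f (embed y) (update (embed y) i (toward (f y i))) :=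
    mpStep_update_toward (fun hb => h (ofBool_injective hb).symm) (toward_ne_ofBool _ _).symm
      ⟨y, by simp [gamma_embed]⟩
  have hset := mpStep_update_ofBool (f := f) (update_self i (toward (f y i)) (embed y))
  rw [update_idem] at hset
  show mpReachP f (embed y) (embed _)
  rw [hembed]
  exact .tail (.single hto) hset

theorem update_mem_gamma {t : Fin n → PState} {z : Fin n → Bool} {i : Fin n}
    (hz : z ∈ gamma t) (hi : ¬ (t i).isBool) (b : Bool) : update z i b ∈ gamma t := by
  intro k v hk
  by_cases hki : k = i
  · subst hki
    exact absurd (hk ▸ isBool_ofBool v) hi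
  · rw [update_of_ne hki]
    exact hz k v hk

theorem mem_gamma_update_ofBool {t : Fin n → PState} {z : Fin n → Bool} {i : Fin n} {b : Bool}
    (hi : ¬ (t i).isBool) : z ∈ gamma (update t i (ofBool b)) ↔ z ∈ gamma t ∧ z i = b := by
  refine ⟨fun hz => ⟨fun k v hk => hz k v ?_, hz i b (update_self ..)⟩, ?_⟩
  · rwa [update_of_ne (by rintro rfl; exact hi (hk ▸ isBool_ofBool v))]
  · rintro ⟨hz, rfl⟩ k v hk
    by_cases hki : k = i
    · subst hki
      rw [update_self] at hk
      exact ofBool_injective hk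
    · rw [update_of_ne hki] at hk
      exact hz k v hk

theorem exists_apply_eq_of_mem_attractor {t : Fin n → PState} {y : Fin n → Bool}
    (ht : MapsTo f (gamma t) (gamma t)) (hy : ∀ y' ∈ mpReach f y, y ∈ mpReach f y')
    (hyt : y ∈ gamma t) {i : Fin n} (hi : ¬ (t i).isBool) : ∃ z ∈ gamma t, f z i = y i := by
  by_contra! hne
  set t' := update t i (ofBool (!y i))
  have hfi : ∀ z ∈ gamma t, f z i = !y i := fun z hz => Bool.eq_not.2 (hne z hz)
  have mem_t' : ∀ z, z ∈ gamma t' ↔ z ∈ gamma t ∧ z i = !y i := fun z =>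
    mem_gamma_update_ofBool hi
  have ht' : MapsTo f (gamma t') (gamma t') := fun z hz =>
    (mem_t' _).2 ⟨ht ((mem_t' z).1 hz).1, hfi z ((mem_t' z).1 hz).1⟩
  have hflip : update y i (!y i) ∈ gamma t' :=
    (mem_t' _).2 ⟨update_mem_gamma hyt hi _, update_self ..⟩
  have hback : y ∈ mpReach f (update y i (!y i)) :=
    hy _ (hfi y hyt ▸ update_mem_mpReach (by simp [hfi y hyt]))
  have hyt' := gamma_subset_of_mpReachP ht' (by simpa [gamma_embed] using hflip) hback
  simp [gamma_embed, mem_t'] at hyt'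

theorem mpReachP_embed_of_forall_exists {t : Fin n → PState} {y : Fin n → Bool}
    (hyt : y ∈ gamma t) (hw : ∀ i, ¬ (t i).isBool → ∃ z ∈ gamma t, f z i = y i) :
    mpReachP f t (embed y) := by
  classical
  let w : Fin n → PState := fun j => if (t j).isBool then ofBool (y j) else toward (y j)
  have toward_w : mpReachP f t w := by
    refine mpReachP_of_forall_update (fun r => gamma r = gamma t) rfl fun r hr j hj => ?_
    have hrt := gamma_subset_gamma_iff.1 hr.le
    have htr := gamma_subset_gamma_iff.1 hr.ge
    have htj : ¬ (t j).isBool := fun htj => by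
      obtain ⟨v, hv⟩ := isBool_iff.1 htj
      refine hj ?_
      simp [w, htj, hrt j v hv, ← hyt j v hv]
    have hrj : ¬ (r j).isBool := fun hrj => by
      obtain ⟨v, hv⟩ := isBool_iff.1 hrj
      exact htj (isBool_iff.2 ⟨v, htr j v hv⟩)
    have hwj : w j = toward (y j) := if_neg htj
    rw [hwj] at hj ⊢
    refine ⟨(gamma_update_of_not_isBool hrj (not_isBool_toward _)).trans hr,
      mpStep_update_toward (fun h => hrj (h ▸ isBool_ofBool _)) hj ?_⟩
    exact hr ▸ hw j htj
  have settle : mpReachP f w (embed y) := by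
    refine mpReachP_of_forall_update (fun r => ∀ j, r j = ofBool (y j) ∨ r j = toward (y j))
      (fun j => by by_cases h : (t j).isBool <;> simp [w, h]) fun r hr j hj => ⟨?_, ?_⟩
    · intro k
      by_cases hkj : k = j
      · simp [hkj, embed]
      · simpa [update_of_ne hkj] using hr k
    · exact mpStep_update_ofBool ((hr j).resolve_left hj)
  exact toward_w.trans settle

theorem bdStep.gamma_subset {L : Finset (Fin n)} {a b : Fin n → PState} (h : bdStep f L a b) :
    gamma a ⊆ gamma b := by
  obtain ⟨hs, j, hj, -, -, hbj⟩ := h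
  refine gamma_subset_gamma_iff.2 fun k v hk => ?_
  have hkj : k ≠ j := by
    rintro rfl
    exact hbj (hk ▸ isBool_ofBool v)
  rw [hs.eq_of_ne hj hkj, hk]

namespace exhaustive

variable {x : Fin n → Bool} {L : Finset (Fin n)} {zhat : Fin n → PState}

theorem mpReachP_embed (hz : exhaustive f x L zhat) : mpReachP f (embed x) zhat :=
  Relation.ReflTransGen.mono (fun _ _ h => h.1) _ _ hz.1

theorem gamma_embed_subset (hz : exhaustive f x L zhat) : gamma (embed x) ⊆ gamma zhat := by
  obtain ⟨hreach, -⟩ := hz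
  induction hreach with
  | refl => exact subset_rfl
  | tail _ hs ih => exact ih.trans hs.gamma_subset

theorem mapsTo_gamma (hz : exhaustive f x ∅ zhat) : MapsTo f (gamma zhat) (gamma zhat) := by
  intro z hzg i v hi
  by_contra hne
  have hzi : zhat i ≠ ofBool (f z i) := hi ▸ fun h => hne (ofBool_injective h).symm
  refine hz.2 (update zhat i (toward (f z i))) ⟨mpStep_update_toward hzi ?_ ⟨z, hzg, rfl⟩, i, ?_,
    Finset.notMem_empty i, hi ▸ isBool_ofBool v, ?_⟩
  · exact hi ▸ (toward_ne_ofBool _ _).symm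
  · simpa [hi] using (toward_ne_ofBool _ _).symm
  · simpa using not_isBool_toward _

end exhaustive

end

theorem stmt19 {n : ℕ} (f : BN n) (x y : Fin n → Bool)
    (hy : ∀ y' ∈ mpReach f y, y ∈ mpReach f y')
    (zhat : Fin n → PState) (hz : exhaustive f x ∅ zhat) :
    (y ∈ mpReach f x ↔ y ∈ gamma zhat) ∧
    (y ∈ gamma zhat →
      ∀ i, ¬ (zhat i).isBool → ∃ z ∈ gamma zhat, f z i = y i) := by
  have htrap := hz.mapsTo_gamma
  have hwit : y ∈ gamma zhat → ∀ i, ¬ (zhat i).isBool → ∃ z ∈ gamma zhat, f z i = y i :=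
    fun hyz _ hi => exists_apply_eq_of_mem_attractor htrap hy hyz hi
  refine ⟨⟨fun hxy => ?_, fun hyz => ?_⟩, hwit⟩
  · simpa [gamma_embed] using gamma_subset_of_mpReachP htrap hz.gamma_embed_subset hxy
  · exact hz.mpReachP_embed.trans (mpReachP_embed_of_forall_exists hyz (hwit hyz))
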